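/- Let A be an abelian variety over K̄ of positive dimension with trivial K̄/k-trace, where k is an algebraically closed field of uncountable cardinality. Suppose there exists a surjective map α from the set A(K̄)_0 of canonical-height-zero points of A onto a set Γ_0 that in turn surjects onto the k-points of a positive-dimensional variety Z over k. Then one reaches a contradiction: A(K̄)_0 would be uncountable, whereas by the Lang–Néron theorem A(K̄)_0 equals the countable set of torsion points. Consequently, under the hypotheses of Lemma 4.6 (an abelian scheme f : 𝒜 → U over an open subset U of a normal projective variety with codimension-2 complement, an effective relative Cartier divisor 𝒟 with ample restriction D to the geometric generic fiber A, and 0_f*(O_𝒜(𝒟)) ≅ O_U), the abelian variety A has non-trivial K̄/k-trace. -/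
import Mathlib


/-!
**Statement 19** (the cardinality argument concluding the proof of Lemma 4.6).

`K` is the function field of a normal projective variety `B` over an algebraically closed
field `k` of uncountable cardinality, `K̄` an algebraic closure.  The abelian variety `A`
over `K̄` (of positive dimension, with trivial `K̄/k`-trace) is modelled by the additive
group of its `K̄`-points with the Zariski topology, and `h` is the canonical height
`ĥ_L` for an even ample line bundle, a non-negative quadratic form.  `A(K̄)₀` denotes the
set of height-zero points.  By the Lang–Néron theorem, trivial `K̄/k`-trace forces
`A(K̄)₀` to be exactly the (countable) set of torsion points; these two facts of the
ambient theory are recorded as the hypotheses `hLangNeron` and `htorsion_countable`.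
`Zk` is the (uncountable) set of `k`-points of a positive-dimensional variety `Z` over
`k`, and we are given surjections `α : A(K̄)₀ → Γ₀` and `β : Γ₀ → Z(k)`.

The statement: these data are contradictory — `A(K̄)₀` would be uncountable, whereas it
equals the countable set of torsion points.  (Consequently, in Lemma 4.6 — an abelian
scheme `f : 𝒜 → U` over an open subset `U` with codimension-`2` complement of a normal
projective variety, an effective relative Cartier divisor `𝒟` whose restriction `D` to
the geometric generic fiber `A` is ample and with `0_f*(O_𝒜(𝒟)) ≅ O_U` — the abelian
variety `A` must have non-trivial `K̄/k`-trace.)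
-/
theorem statement19
    (A : Type) [AddCommGroup A] [TopologicalSpace A] [IrreducibleSpace A]
    -- `A` has positive dimension
    (hApos : (0 : WithBot ℕ∞) < topologicalKrullDim A)
    -- the canonical height for an even ample line bundle `L`
    (h : A → ℝ) (h_nonneg : ∀ x, 0 ≤ h x)
    (h_quadratic : ∀ x y, h (x + y) + h (x - y) = 2 * h x + 2 * h y)
    -- `A` has trivial `K̄/k`-trace
    (constImage : Set A → Prop) (htriv : ∀ Y : Set A, constImage Y → Y ⊆ {0})
    -- the Lang–Néron theorem: height-zero points are exactly the torsion points
    (hLangNeron : {x : A | h x = 0} = {x : A | IsOfFinAddOrder x})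
    -- the torsion subgroup of an abelian variety over `K̄` is countable
    (htorsion_countable : Set.Countable {x : A | IsOfFinAddOrder x})
    -- the `k`-points of a positive-dimensional variety over an uncountable
    -- algebraically closed field `k`: an uncountable set
    (Zk : Type) (hZk : ¬ Countable Zk)
    -- the surjections `A(K̄)₀ → Γ₀ → Z(k)`
    (Γ₀ : Type)
    (α : {x : A // h x = 0} → Γ₀) (hα : Function.Surjective α)
    (β : Γ₀ → Zk) (hβ : Function.Surjective β) :
    False := by
  have hc : Set.Countable {x : A | h x = 0} := hLangNeron ▸ htorsion_countable
  have : Countable {x : A // h x = 0} := hc.to_subtype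
  have : Countable Γ₀ := hα.countable
  exact hZk (hβ.countable)
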